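/- Let (𝔉ₙ)_{n≥1} be a filtration, and let (aₙ)_{n≥1}, (cₙ)_{n≥1} be integrable real random variables and (Zₙ)_{n≥1} nonnegative integrable real random variables, all adapted to (𝔉ₙ). Write aₙ^+ = max(0, aₙ). Assume 𝔼[Z_{n+1} | 𝔉ₙ] ≤ (1 − aₙ)·Zₙ + cₙ almost surely for all n ≥ 1 and that aₙ^+·Zₙ is integrable for every n. Suppose there exist constants c > 0 and β with 0 < β < c such that aₙ ≥ c/n almost surely for every n ≥ 1, and the series Σ_{n=1}^∞ n^β·cₙ converges almost surely to a finite limit. Then n^β·Zₙ → 0 almost surely as n → ∞. -/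

import Mathlib

/-!
With `Vₙ = (n - 1)^β Zₙ`, the bound `aₙ ≥ C/n` gives `𝔼[Vₙ₊₁ | 𝔉ₙ] ≤ (1 - δ/n) Vₙ + n^β cₙ` for
large `n`, where `δ = (C - β)/2`, because `(n/(n-1))^β (1 - C/n) ≤ 1 - δ/n` eventually. So
`Vₙ + Σ_{k<n} (δ/k) Vₖ - Σ_{k<n} k^β cₖ` is a supermartingale. It is bounded below by the
predictable process `-Σ_{k<n} k^β cₖ`, which converges almost surely but need not be integrably
bounded; stopping it when it first drops below `-r`, for each `r ∈ ℕ`, gives supermartingales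
bounded below by a constant, and they converge almost surely. Hence `Vₙ` converges and
`Σ Vₖ/k < ∞`, so the limit is `0` because `Σ 1/k = ∞`.
-/

open MeasureTheory Filter Topology Finset

theorem Real.add_one_rpow_mul_sub_le {x β : ℝ} (hβ : 0 ≤ β) (hx : β < x) :
    (x + 1) ^ β * (x - β) ≤ x ^ β * x := by
  have hx0 : 0 < x := hβ.trans_lt hx
  -- `(1 + 1/x)^β ≤ exp (β/x) ≤ 1 / (1 - β/x)`
  have h1 : (x + 1) ^ β ≤ x ^ β * exp (β / x) := by
    calc (x + 1) ^ β ≤ (x * exp (1 / x)) ^ β := by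
          gcongr
          have := add_one_le_exp (1 / x)
          field_simp at this ⊢
          linarith
      _ = x ^ β * exp (β / x) := by
          rw [mul_rpow hx0.le (exp_pos _).le, ← exp_mul]; ring_nf
  have h2 : exp (β / x) * (x - β) ≤ x := by
    have h := mul_le_mul_of_nonneg_left (one_sub_le_exp_neg (β / x)) (exp_pos (β / x)).le
    rw [← exp_add, add_neg_cancel, exp_zero] at h
    field_simp at h
    linarith
  calc (x + 1) ^ β * (x - β) ≤ x ^ β * exp (β / x) * (x - β) := by gcongr
    _ = x ^ β * (exp (β / x) * (x - β)) := by ring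
    _ ≤ x ^ β * x := by gcongr

theorem Real.eventually_add_one_rpow_mul_one_sub_div_le {β C : ℝ} (hβ : 0 ≤ β) (hβC : β < C) :
    ∀ᶠ x : ℝ in atTop,
      (x + 1) ^ β * (1 - C / (x + 1)) ≤ (1 - (C - β) / 2 / (x + 1)) * x ^ β := by
  filter_upwards [eventually_ge_atTop C, eventually_ge_atTop (2 * β / (C - β))] with x hxC hxβ
  have hx : 0 < x - β := by linarith
  have hx1 : 0 < x + 1 := by linarith
  have hxβ' : 2 * β ≤ (C - β) * x := by rwa [div_le_iff₀' (by linarith)] at hxβ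
  have hpoly : x * (x + 1 - C) ≤ (x + 1 - (C - β) / 2) * (x - β) := by nlinarith
  rw [one_sub_div hx1.ne', one_sub_div hx1.ne', mul_div_assoc', div_mul_eq_mul_div,
    div_le_div_iff_of_pos_right hx1]
  refine le_of_mul_le_mul_right ?_ hx
  calc (x + 1) ^ β * (x + 1 - C) * (x - β) = (x + 1) ^ β * (x - β) * (x + 1 - C) := by ring
    _ ≤ x ^ β * x * (x + 1 - C) :=
        mul_le_mul_of_nonneg_right (add_one_rpow_mul_sub_le hβ (by linarith)) (by linarith)
    _ = x ^ β * (x * (x + 1 - C)) := by ring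
    _ ≤ x ^ β * ((x + 1 - (C - β) / 2) * (x - β)) :=
        mul_le_mul_of_nonneg_left hpoly (rpow_nonneg (by linarith) _)
    _ = (x + 1 - (C - β) / 2) * x ^ β * (x - β) := by ring

theorem Real.not_summable_div_natCast_add {δ : ℝ} (hδ : δ ≠ 0) (k : ℕ) :
    ¬Summable fun i : ℕ => δ / ((i + k : ℕ) : ℝ) := by
  rw [summable_nat_add_iff k (f := fun n : ℕ => δ / (n : ℝ))]
  simpa only [div_eq_mul_inv, summable_mul_left_iff hδ] using not_summable_natCast_inv

theorem tendsto_rpow_mul_of_tendsto_shift {z : ℕ → ℝ} {β : ℝ} {N : ℕ} (hβ : 0 ≤ β)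
    (hN : 1 ≤ N) (hz : ∀ n, 0 ≤ z n)
    (h : Tendsto (fun i => ((i + N : ℕ) : ℝ) ^ β * z (i + (N + 1))) atTop (𝓝 0)) :
    Tendsto (fun n : ℕ => (n : ℝ) ^ β * z n) atTop (𝓝 0) := by
  refine (tendsto_add_atTop_iff_nat (N + 1)).1 <| squeeze_zero
    (fun i => mul_nonneg (by positivity) (hz _)) (fun i => ?_)
    (by simpa only [mul_zero] using h.const_mul (2 ^ β))
  have hx : (1 : ℝ) ≤ (i + N : ℕ) := by exact_mod_cast hN.trans (N.le_add_left i)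
  have hpow : ((i + (N + 1) : ℕ) : ℝ) ^ β ≤ 2 ^ β * ((i + N : ℕ) : ℝ) ^ β := by
    rw [← add_assoc, Nat.cast_add_one, ← Real.mul_rpow zero_le_two (by linarith)]
    gcongr
    linarith
  rw [← mul_assoc]
  exact mul_le_mul_of_nonneg_right hpow (hz _)

theorem eq_zero_of_tendsto_of_summable_mul {w r : ℕ → ℝ} {L : ℝ} (hw : Tendsto w atTop (𝓝 L))
    (hr : ¬Summable r) (hrw : Summable fun n => r n * w n) : L = 0 := by
  by_contra hL
  refine hr (Summable.of_norm_bounded_eventually_nat (hrw.abs.mul_left (2 / |L|)) ?_)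
  filter_upwards [hw.abs.eventually (eventually_gt_nhds (half_lt_self (abs_pos.2 hL)))]
    with n hn
  have := mul_le_mul_of_nonneg_left hn.le (abs_nonneg (r n))
  rw [Real.norm_eq_abs, abs_mul, div_mul_eq_mul_div, le_div_iff₀ (abs_pos.2 hL)]
  linarith

theorem tendsto_sum_range_add_of_tendsto_sum_Icc {u : ℕ → ℝ} {l : ℝ}
    (h : Tendsto (fun n => ∑ k ∈ Icc 1 n, u k) atTop (𝓝 l)) (N : ℕ) :
    Tendsto (fun n => ∑ k ∈ range n, u (k + (N + 1))) atTop
      (𝓝 (l - ∑ k ∈ Icc 1 N, u k)) := by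
  have hsplit n : ∑ k ∈ Icc 1 (n + N), u k
      = ∑ k ∈ Icc 1 N, u k + ∑ k ∈ range n, u (k + (N + 1)) := by
    induction n with
    | zero => simp
    | succ n ih =>
      rw [show n + 1 + N = n + N + 1 by omega, sum_Icc_succ_top (by omega), ih, sum_range_succ,
        add_assoc]
      rfl
  exact ((h.comp (tendsto_add_atTop_nat N)).sub_const _).congr fun n => by simp [hsplit]

theorem summable_and_tendsto_of_tendsto_add_sum {v u : ℕ → ℝ} {l : ℝ} (hv : ∀ n, 0 ≤ v n)
    (hu : ∀ n, 0 ≤ u n) (h : Tendsto (fun n => v n + ∑ k ∈ range n, u k) atTop (𝓝 l)) :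
    Summable u ∧ Tendsto v atTop (𝓝 (l - ∑' k, u k)) := by
  obtain ⟨b, hb⟩ := h.bddAbove_range
  have hsum : Summable u := summable_of_sum_range_le hu fun n =>
    (le_add_of_nonneg_left (hv n)).trans (hb ⟨n, rfl⟩)
  exact ⟨hsum, by simpa using h.sub hsum.hasSum.tendsto_sum_nat⟩

namespace MeasureTheory

variable {Ω : Type*} {m0 : MeasurableSpace Ω} {μ : Measure Ω}

theorem condExp_const_mul_le_of_le {m : MeasurableSpace Ω} {Y A Z c : Ω → ℝ} {κ α ρ : ℝ}
    (hκ : 0 ≤ κ) (hY : μ[Y | m] ≤ᵐ[μ] fun ω => (1 - A ω) * Z ω + c ω)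
    (hA : ∀ᵐ ω ∂μ, α ≤ A ω) (hZ : 0 ≤ᵐ[μ] Z) (hρ : κ * (1 - α) ≤ ρ) :
    μ[fun ω => κ * Y ω | m] ≤ᵐ[μ] fun ω => ρ * Z ω + κ * c ω := by
  filter_upwards [condExp_smul κ Y m, hY, hA, hZ] with ω hsmul hYω hAω hZω
  change μ[κ • Y | m] ω ≤ _
  rw [hsmul, Pi.smul_apply, smul_eq_mul]
  have hcoef : κ * (1 - A ω) ≤ ρ := (mul_le_mul_of_nonneg_left (by linarith) hκ).trans hρ
  calc κ * μ[Y | m] ω ≤ κ * ((1 - A ω) * Z ω + c ω) := mul_le_mul_of_nonneg_left hYω hκ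
    _ = κ * (1 - A ω) * Z ω + κ * c ω := by ring
    _ ≤ ρ * Z ω + κ * c ω := by gcongr

def Filtration.shift (ℱ : Filtration ℕ m0) (k : ℕ) : Filtration ℕ m0 where
  seq n := ℱ (n + k)
  mono' _ _ h := ℱ.mono (by omega)
  le' _ := ℱ.le _

variable [IsFiniteMeasure μ] {𝒢 : Filtration ℕ m0} {f g : ℕ → Ω → ℝ}

theorem Submartingale.exists_ae_tendsto_of_le_const (hf : Submartingale f 𝒢 μ) {R : ℝ}
    (hR : ∀ n, ∀ᵐ ω ∂μ, f n ω ≤ R) :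
    ∀ᵐ ω ∂μ, ∃ c, Tendsto (fun n => f n ω) atTop (𝓝 c) := by
  -- centred at the mean of `f 0`, every `f n` has nonnegative integral, which turns the upper
  -- bound into an `L¹` bound
  set m := ⨍ ω, f 0 ω ∂μ
  have hg : Submartingale (f - fun _ _ => m) 𝒢 μ := hf.sub_martingale (martingale_const _ _ _)
  have hbdd n : eLpNorm (fun ω => f n ω - m) 1 μ
      ≤ (2 * μ Set.univ * ENNReal.ofReal (R - m)).toNNReal := by
    rw [ENNReal.coe_toNNReal (by finiteness)]
    refine eLpNorm_one_le_of_le' (hg.integrable n) ?_ ?_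
    · have := hf.setIntegral_le n.zero_le MeasurableSet.univ
      rw [setIntegral_univ, setIntegral_univ] at this
      rw [integral_sub (hf.integrable n) (integrable_const m), integral_average]
      linarith
    · filter_upwards [hR n] with ω hω
      linarith
  filter_upwards [hg.exists_ae_tendsto_of_bdd hbdd] with ω ⟨c, hc⟩
  exact ⟨c + m, by simpa using hc.add_const m⟩

theorem Submartingale.exists_tendsto_of_le_of_bddAbove (hf : Submartingale f 𝒢 μ)
    (hg : StronglyAdapted 𝒢 fun n => g (n + 1)) (hg0 : g 0 = 0) (hfg : ∀ n, f n ≤ᵐ[μ] g n) :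
    ∀ᵐ ω ∂μ, BddAbove (Set.range fun n => g n ω) →
      ∃ c, Tendsto (fun n => f n ω) atTop (𝓝 c) := by
  set τ : ℕ → Ω → WithTop ℕ := fun r => leastGE (fun n => g (n + 1)) (r : ℝ)
  have hstop_le r n : ∀ᵐ ω ∂μ, stoppedProcess f (τ r) n ω ≤ r := by
    filter_upwards [ae_all_iff.2 hfg] with ω hfgω
    obtain ⟨k, hk⟩ := WithTop.ne_top_iff_exists.1
      (ne_top_of_le_ne_top WithTop.coe_ne_top (min_le_left (n : WithTop ℕ) (τ r ω)))
    change f (min (n : WithTop ℕ) (τ r ω)).untopA ω ≤ r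
    rw [← hk]
    refine (hfgω k).trans ?_
    rcases k with _ | j
    · simp [hg0]
    · have hj : (j : WithTop ℕ) < τ r ω :=
        (WithTop.coe_lt_coe.2 j.lt_succ_self).trans_le (hk.trans_le (min_le_right _ _))
      exact le_of_lt (by simpa using notMem_of_lt_hittingAfter hj bot_le)
  have hconv : ∀ᵐ ω ∂μ, ∀ r : ℕ,
      ∃ c, Tendsto (fun n => stoppedProcess f (τ r) n ω) atTop (𝓝 c) :=
    ae_all_iff.2 fun r =>
      (hf.stoppedProcess (hg.isStoppingTime_leastGE _)).exists_ae_tendsto_of_le_const (hstop_le r)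
  filter_upwards [hconv] with ω hω ⟨b, hb⟩
  obtain ⟨r, hr⟩ := exists_nat_gt b
  have hτ_top : τ r ω = ⊤ := hittingAfter_eq_top_iff.2 fun j _ => by
    simpa using (hb ⟨j + 1, rfl⟩).trans_lt hr
  obtain ⟨c, hc⟩ := hω r
  exact ⟨c, hc.congr fun n => by simp only [stoppedProcess, hτ_top]; rfl⟩

theorem exists_ae_tendsto_and_summable_of_condExp_le {V U D : ℕ → Ω → ℝ}
    (hV : StronglyAdapted 𝒢 V) (hU : StronglyAdapted 𝒢 U) (hD : StronglyAdapted 𝒢 D)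
    (hVint : ∀ n, Integrable (V n) μ) (hUint : ∀ n, Integrable (U n) μ)
    (hDint : ∀ n, Integrable (D n) μ) (hV0 : ∀ n, 0 ≤ᵐ[μ] V n) (hU0 : ∀ n, 0 ≤ᵐ[μ] U n)
    (hrec : ∀ n, μ[V (n + 1) | 𝒢 n] ≤ᵐ[μ] V n - U n + D n)
    (hDsum : ∀ᵐ ω ∂μ, ∃ l, Tendsto (fun n => ∑ k ∈ range n, D k ω) atTop (𝓝 l)) :
    ∀ᵐ ω ∂μ, (∃ v, Tendsto (fun n => V n ω) atTop (𝓝 v)) ∧ Summable fun n => U n ω := by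
  set P : ℕ → Ω → ℝ := fun n ω => ∑ k ∈ range n, (U k ω - D k ω)
  set G : ℕ → Ω → ℝ := fun n ω => ∑ k ∈ range n, D k ω
  have hP i n (hn : n ≤ i + 1) : StronglyMeasurable[𝒢 i] (P n) :=
    Finset.stronglyMeasurable_fun_sum _ fun k hk =>
      ((hU k).sub (hD k)).mono (𝒢.mono (by simp only [mem_range] at hk; omega))
  have hPint n : Integrable (P n) μ := integrable_finsetSum _ fun k _ => (hUint k).sub (hDint k)
  have hX : Supermartingale (fun n => V n + P n) 𝒢 μ := by
    refine supermartingale_nat (fun n => (hV n).add (hP n n (by omega)))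
      (fun n => (hVint n).add (hPint n)) fun n => ?_
    filter_upwards [condExp_add (hVint (n + 1)) (hPint (n + 1)) (𝒢 n), hrec n] with ω hadd hω
    rw [hadd, Pi.add_apply,
      condExp_of_stronglyMeasurable (𝒢.le n) (hP n (n + 1) le_rfl) (hPint (n + 1))]
    simp only [P, sum_range_succ, Pi.add_apply, Pi.sub_apply] at hω ⊢
    linarith
  have hXG n : -(V n + P n) ≤ᵐ[μ] G n := by
    filter_upwards [hV0 n, ae_all_iff.2 hU0] with ω hVω hUω
    simp only [Pi.neg_apply, Pi.add_apply, P, G, sum_sub_distrib]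
    have := sum_nonneg fun k (_ : k ∈ range n) => hUω k
    simp only [Pi.zero_apply] at hVω this
    linarith
  have hG : StronglyAdapted 𝒢 fun n => G (n + 1) := fun n =>
    Finset.stronglyMeasurable_fun_sum _ fun k hk =>
      (hD k).mono (𝒢.mono (by simp only [mem_range] at hk; omega))
  filter_upwards [hX.neg.exists_tendsto_of_le_of_bddAbove hG (funext fun _ => sum_range_zero _)
    hXG, hDsum, ae_all_iff.2 hV0, ae_all_iff.2 hU0] with ω hconv ⟨l, hl⟩ hVω hUω
  obtain ⟨c, hc⟩ := hconv hl.bddAbove_range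
  have hsum : Tendsto (fun n => V n ω + ∑ k ∈ range n, U k ω) atTop (𝓝 (-c + l)) :=
    (hc.neg.add hl).congr fun n => by
      simp only [P, Pi.neg_apply, Pi.add_apply, neg_neg, sum_sub_distrib]
      ring
  obtain ⟨hU, hV⟩ := summable_and_tendsto_of_tendsto_add_sum hVω hUω hsum
  exact ⟨⟨_, hV⟩, hU⟩

end MeasureTheory

theorem modified_robbins_siegmund_part3_general
    {Ω : Type*} {m0 : MeasurableSpace Ω} {μ : Measure Ω} [IsProbabilityMeasure μ]
    (ℱ : Filtration ℕ m0)
    (a c Z : ℕ → Ω → ℝ)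
    (hcadapted : Adapted ℱ c) (hZadapted : Adapted ℱ Z)
    (hcint : ∀ n, Integrable (c n) μ)
    (hZint : ∀ n, Integrable (Z n) μ) (hZnonneg : ∀ n, 0 ≤ᵐ[μ] Z n)
    (hrec : ∀ n : ℕ, 1 ≤ n →
      μ[Z (n + 1) | ℱ n] ≤ᵐ[μ] fun ω => (1 - a n ω) * Z n ω + c n ω)
    (C β : ℝ) (hβ0 : 0 < β) (hβC : β < C)
    (halow : ∀ n : ℕ, 1 ≤ n → ∀ᵐ ω ∂μ, C / n ≤ a n ω)
    (hcsum : ∀ᵐ ω ∂μ, ∃ l : ℝ,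
      Tendsto (fun N : ℕ => ∑ n ∈ Finset.Icc 1 N, (n : ℝ) ^ β * c n ω) atTop (𝓝 l)) :
    ∀ᵐ ω ∂μ, Tendsto (fun n : ℕ => (n : ℝ) ^ β * Z n ω) atTop (𝓝 0) := by
  obtain ⟨N, hN⟩ := eventually_atTop.1 <| (tendsto_natCast_atTop_atTop.eventually
    (Real.eventually_add_one_rpow_mul_one_sub_div_le hβ0.le hβC)).and (eventually_ge_atTop 1)
  set δ := (C - β) / 2
  set V : ℕ → Ω → ℝ := fun i ω => ((i + N : ℕ) : ℝ) ^ β * Z (i + (N + 1)) ω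
  set U : ℕ → Ω → ℝ := fun i ω => δ / ((i + (N + 1) : ℕ) : ℝ) * V i ω
  set D : ℕ → Ω → ℝ := fun i ω => ((i + (N + 1) : ℕ) : ℝ) ^ β * c (i + (N + 1)) ω
  have hV : StronglyAdapted (ℱ.shift (N + 1)) V := fun i =>
    (hZadapted _).stronglyMeasurable.const_mul _
  have hV0 i : 0 ≤ᵐ[μ] V i := by
    filter_upwards [hZnonneg _] with ω hω using mul_nonneg (by positivity) hω
  have hrecV i : μ[V (i + 1) | ℱ.shift (N + 1) i] ≤ᵐ[μ] V i - U i + D i := by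
    have hn : 1 ≤ i + (N + 1) := by omega
    have hV1 : V (i + 1) = fun ω => ((i + (N + 1) : ℕ) : ℝ) ^ β * Z (i + (N + 1) + 1) ω := by
      simp only [V, show i + 1 + N = i + (N + 1) by omega,
        show i + 1 + (N + 1) = i + (N + 1) + 1 by omega]
    rw [hV1]
    refine (condExp_const_mul_le_of_le (ρ := (1 - δ / ((i + (N + 1) : ℕ) : ℝ)) *
      ((i + N : ℕ) : ℝ) ^ β) (by positivity) (hrec _ hn) (halow _ hn) (hZnonneg _)
      ?_).trans_eq (ae_of_all _ fun ω => ?_)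
    · simpa only [← add_assoc, Nat.cast_add_one] using (hN (i + N) (by omega)).1
    · simp only [U, D, Pi.add_apply, Pi.sub_apply]
      ring
  filter_upwards [exists_ae_tendsto_and_summable_of_condExp_le hV (fun i => (hV i).const_mul _)
      (fun i => (hcadapted _).stronglyMeasurable.const_mul _) (fun i => (hZint _).const_mul _)
      (fun i => ((hZint _).const_mul _).const_mul _) (fun i => (hcint _).const_mul _) hV0
      (fun i => by filter_upwards [hV0 i] with ω hω using mul_nonneg (by positivity) hω) hrecV
      (by filter_upwards [hcsum] with ω ⟨l, hl⟩
          using ⟨_, tendsto_sum_range_add_of_tendsto_sum_Icc hl N⟩),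
    ae_all_iff.2 hZnonneg] with ω ⟨⟨v, hv⟩, hsum⟩ hZω
  obtain rfl : v = 0 :=
    eq_zero_of_tendsto_of_summable_mul hv (Real.not_summable_div_natCast_add (by positivity) _) hsum
  exact tendsto_rpow_mul_of_tendsto_shift hβ0.le (hN N le_rfl).2 hZω hv

/-- Modified Robbins–Siegmund theorem, Part 3 (rate statement): if `aₙ ≥ c/n` almost
surely with `0 < β < c`, `aₙ⁺·Zₙ` is integrable, and `Σ n^β·cₙ` converges almost
surely, then `n^β·Zₙ → 0` almost surely. -/
theorem modified_robbins_siegmund_part3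
    {Ω : Type*} {m0 : MeasurableSpace Ω} {μ : Measure Ω} [IsProbabilityMeasure μ]
    (ℱ : Filtration ℕ m0)
    (a c Z : ℕ → Ω → ℝ)
    (haadapted : Adapted ℱ a) (hcadapted : Adapted ℱ c) (hZadapted : Adapted ℱ Z)
    (haint : ∀ n, Integrable (a n) μ) (hcint : ∀ n, Integrable (c n) μ)
    (hZint : ∀ n, Integrable (Z n) μ) (hZnonneg : ∀ n, 0 ≤ᵐ[μ] Z n)
    (hrec : ∀ n : ℕ, 1 ≤ n →
      μ[Z (n + 1) | ℱ n] ≤ᵐ[μ] fun ω => (1 - a n ω) * Z n ω + c n ω)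
    (haplusZ : ∀ n, Integrable (fun ω => max 0 (a n ω) * Z n ω) μ)
    (C β : ℝ) (hβ0 : 0 < β) (hβC : β < C)
    (halow : ∀ n : ℕ, 1 ≤ n → ∀ᵐ ω ∂μ, C / n ≤ a n ω)
    (hcsum : ∀ᵐ ω ∂μ, ∃ l : ℝ,
      Tendsto (fun N : ℕ => ∑ n ∈ Finset.Icc 1 N, (n : ℝ) ^ β * c n ω) atTop (𝓝 l)) :
    ∀ᵐ ω ∂μ, Tendsto (fun n : ℕ => (n : ℝ) ^ β * Z n ω) atTop (𝓝 0) :=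
  modified_robbins_siegmund_part3_general ℱ a c Z hcadapted hZadapted hcint hZint hZnonneg hrec C β
    hβ0 hβC halow hcsum
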